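/- Let s ∈ R, let χ be a Schwartz function on R^d with L^2 norm 1, and define Tf(y,η) = ⟨f, χ_{y,η}⟩ for f Schwartz, where χ_{y,η}(x) = χ(x−y)e^{2πi η·x}. Then for every Schwartz f, the quantity ‖f‖_{S^{−s}} := ∫_{R^d×R^d} |Tf(y,η)| ⟨y⟩^{−s} ⟨η⟩^{−s} dy dη is finite, and moreover for each fixed (y_0, η_0), ‖χ_{y_0,η_0}‖_{S^{−s}} ≤ C(s) ⟨y_0⟩^{−s} ⟨η_0⟩^{−s}. -/

import Mathlib

open MeasureTheory

noncomputable def jb {d : ℕ} (x : EuclideanSpace ℝ (Fin d)) : ℝ := Real.sqrt (1 + ‖x‖ ^ 2)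

/-- The Gabor transform `Tf(y,η) = ⟨f, χ_{y,η}⟩`. -/
noncomputable def gaborT {d : ℕ} (χ f : SchwartzMap (EuclideanSpace ℝ (Fin d)) ℂ)
    (y η : EuclideanSpace ℝ (Fin d)) : ℂ :=
  ∫ x : EuclideanSpace ℝ (Fin d),
    f x * (starRingEnd ℂ) (χ (x - y) * Complex.exp (2 * Real.pi * Complex.I * ((inner ℝ η x : ℝ) : ℂ)))

/-!
Write `Tf(y, η)` as the Fourier transform at `η` of `g_y = f · conj χ(· - y)`. The Leibniz rule
and Peetre's inequality `⟨y⟩ ≤ (1 + |x|)(1 + |x - y|)` show that `y ↦ ⟨y⟩^N g_y` is a bounded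
family of Schwartz functions. The Fourier transform is continuous on the Schwartz space, so it
maps this family to a bounded one, and a weighted sup seminorm of the image gives
`|Tf(y, η)| ≤ C_N ⟨y⟩^{-N} ⟨η⟩^{-N}`; hence every polynomially weighted integral of `|Tf|` is
finite. For the wave packet, `|⟨χ_{y₀,η₀}, χ_{y,η}⟩| = |Tχ(y - y₀, η - η₀)|`, and Peetre's
inequality `⟨y⟩^{-s} ≤ 2^{|s|} ⟨y - y₀⟩^{|s|} ⟨y₀⟩^{-s}` moves the weights onto `(y₀, η₀)`.
-/

section

open SchwartzMap Real Finset FourierTransform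

variable {d : ℕ}

local notation "𝔼" => EuclideanSpace ℝ (Fin d)

lemma jb_nonneg (x : 𝔼) : 0 ≤ jb x := Real.sqrt_nonneg _

lemma one_le_jb (x : 𝔼) : 1 ≤ jb x :=
  Real.one_le_sqrt.mpr (le_add_of_nonneg_right (sq_nonneg _))

lemma jb_pos (x : 𝔼) : 0 < jb x := one_pos.trans_le (one_le_jb x)

lemma jb_rpow_nonneg (x : 𝔼) (t : ℝ) : 0 ≤ jb x ^ t := Real.rpow_nonneg (jb_nonneg x) t

lemma jb_le_one_add_norm (x : 𝔼) : jb x ≤ 1 + ‖x‖ :=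
  Real.sqrt_le_iff.mpr ⟨by positivity, by nlinarith [norm_nonneg x]⟩

lemma jb_sub_comm (x y : 𝔼) : jb (x - y) = jb (y - x) := by
  rw [jb, jb, norm_sub_rev]

lemma continuous_jb : Continuous (jb : 𝔼 → ℝ) := by
  unfold jb; fun_prop

lemma jb_le_two_mul_jb_mul_jb_sub (x y : 𝔼) : jb x ≤ 2 * jb y * jb (x - y) := by
  have hxy : ‖x‖ ≤ ‖y‖ + ‖x - y‖ := norm_le_norm_add_norm_sub' x y
  rw [jb, jb, jb, Real.sqrt_le_iff]
  refine ⟨by positivity, ?_⟩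
  rw [mul_pow, mul_pow, Real.sq_sqrt (by positivity), Real.sq_sqrt (by positivity)]
  nlinarith [norm_nonneg x, norm_nonneg y, norm_nonneg (x - y), sq_nonneg (‖y‖ - ‖x - y‖),
    mul_nonneg (sq_nonneg ‖y‖) (sq_nonneg ‖x - y‖)]

lemma jb_rpow_neg_le (s : ℝ) (x y : 𝔼) :
    jb x ^ (-s) ≤ 2 ^ |s| * jb (x - y) ^ |s| * jb y ^ (-s) := by
  have h2 : (0 : ℝ) ≤ 2 * jb (x - y) := by linarith [jb_nonneg (x - y)]
  rw [← Real.mul_rpow zero_le_two (jb_nonneg _)]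
  rcases le_or_gt 0 s with hs | hs
  · have hyx : jb y ≤ 2 * jb (x - y) * jb x := by
      have := jb_le_two_mul_jb_mul_jb_sub y x
      rw [← jb_sub_comm x y] at this
      linarith
    have hinv : (jb x)⁻¹ ≤ 2 * jb (x - y) * (jb y)⁻¹ := by
      rw [← div_eq_mul_inv, le_div_iff₀ (jb_pos y), inv_mul_le_iff₀ (jb_pos x)]
      linarith
    calc jb x ^ (-s) = (jb x)⁻¹ ^ s := by
          rw [Real.rpow_neg (jb_nonneg x), Real.inv_rpow (jb_nonneg x)]
      _ ≤ (2 * jb (x - y) * (jb y)⁻¹) ^ s := Real.rpow_le_rpow (inv_nonneg.2 (jb_nonneg x)) hinv hs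
      _ = (2 * jb (x - y)) ^ |s| * jb y ^ (-s) := by
          rw [Real.mul_rpow h2 (inv_nonneg.2 (jb_nonneg y)), Real.inv_rpow (jb_nonneg y),
            Real.rpow_neg (jb_nonneg y), abs_of_nonneg hs]
  · rw [abs_of_neg hs, ← Real.mul_rpow h2 (jb_nonneg y)]
    refine Real.rpow_le_rpow (jb_nonneg x) ?_ (by linarith)
    linarith [jb_le_two_mul_jb_mul_jb_sub x y]

lemma jb_rpow_mul_rpow_le (x : 𝔼) {a b c : ℝ} (h : a + b ≤ c) :
    jb x ^ a * jb x ^ b ≤ jb x ^ c := by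
  rw [← Real.rpow_add (jb_pos x)]
  exact Real.rpow_le_rpow_of_exponent_le (one_le_jb x) h

lemma integrable_jb_rpow_neg {t : ℝ} (ht : (d : ℝ) < t) :
    Integrable fun x : 𝔼 => jb x ^ (-t) := by
  refine (integrable_rpow_neg_one_add_norm_sq (E := 𝔼) (r := t)
    (by rwa [finrank_euclideanSpace_fin])).congr (Filter.Eventually.of_forall fun x => ?_)
  simp only [jb]
  rw [Real.sqrt_eq_rpow, ← Real.rpow_mul (by positivity)]
  ring_nf

noncomputable def wavePacket (χ : 𝓢(𝔼, ℂ)) (y η x : 𝔼) : ℂ :=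
  χ (x - y) * Complex.exp (2 * π * Complex.I * ((inner ℝ η x : ℝ) : ℂ))

lemma norm_cexp_two_pi_I_mul (r : ℝ) : ‖Complex.exp (2 * π * Complex.I * r)‖ = 1 := by
  simp [Complex.norm_exp]

lemma norm_wavePacket (χ : 𝓢(𝔼, ℂ)) (y η x : 𝔼) : ‖wavePacket χ y η x‖ = ‖χ (x - y)‖ := by
  rw [wavePacket, norm_mul, norm_cexp_two_pi_I_mul, mul_one]

lemma wavePacket_mul_conj_wavePacket_add (χ : 𝓢(𝔼, ℂ)) (y₀ η₀ y η u : 𝔼) :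
    wavePacket χ y₀ η₀ (u + y₀) * starRingEnd ℂ (wavePacket χ y η (u + y₀)) =
      Complex.exp (2 * π * Complex.I * ((inner ℝ η₀ y₀ - inner ℝ η y₀ : ℝ) : ℂ)) *
        (χ u * starRingEnd ℂ (wavePacket χ (y - y₀) (η - η₀) u)) := by
  simp only [wavePacket, map_mul, ← Complex.exp_conj, Complex.conj_ofReal, Complex.conj_I,
    map_ofNat, add_sub_cancel_right, inner_add_right, inner_sub_left, Complex.ofReal_add,
    Complex.ofReal_sub, mul_add, mul_sub, mul_neg, neg_mul, Complex.exp_add, Complex.exp_sub,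
    Complex.exp_neg, map_div₀, sub_sub_eq_add_sub]
  field_simp

lemma norm_integral_wavePacket_mul_conj (χ : 𝓢(𝔼, ℂ)) (y₀ η₀ y η : 𝔼) :
    ‖∫ x, wavePacket χ y₀ η₀ x * starRingEnd ℂ (wavePacket χ y η x)‖ =
      ‖gaborT χ χ (y - y₀) (η - η₀)‖ := by
  rw [← integral_add_right_eq_self _ y₀]
  simp_rw [wavePacket_mul_conj_wavePacket_add]
  rw [integral_const_mul, norm_mul, norm_cexp_two_pi_I_mul, one_mul]
  rfl

lemma continuous_gaborT (χ f : 𝓢(𝔼, ℂ)) :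
    Continuous fun p : 𝔼 × 𝔼 => gaborT χ f p.1 p.2 := by
  refine continuous_of_dominated (bound := fun x => ‖f x‖ * SchwartzMap.seminorm ℝ 0 0 χ)
    (fun p => ?_) (fun p => Filter.Eventually.of_forall fun x => ?_)
    ((f.integrable.norm).mul_const _) (Filter.Eventually.of_forall fun x => ?_)
  · exact Continuous.aestronglyMeasurable (by fun_prop)
  · rw [norm_mul, RCLike.norm_conj, ← wavePacket, norm_wavePacket]
    exact mul_le_mul_of_nonneg_left (χ.norm_le_seminorm ℝ _) (norm_nonneg _)
  · fun_prop

lemma norm_iteratedFDeriv_conj_comp_sub (χ : 𝓢(𝔼, ℂ)) (n : ℕ) (y x : 𝔼) :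
    ‖iteratedFDeriv ℝ n (fun z => starRingEnd ℂ (χ (z - y))) x‖ =
      ‖iteratedFDeriv ℝ n χ (x - y)‖ := by
  rw [show (fun z => starRingEnd ℂ (χ (z - y))) = Complex.conjLIE ∘ fun z => χ (z - y) from rfl,
    Complex.conjLIE.norm_iteratedFDeriv_comp_left, iteratedFDeriv_comp_sub]

lemma contDiff_conj_comp_sub (χ : 𝓢(𝔼, ℂ)) (y : 𝔼) :
    ContDiff ℝ (⊤ : ℕ∞) fun z => starRingEnd ℂ (χ (z - y)) := by
  have := χ.smooth ⊤
  exact Complex.conjCLE.contDiff.comp (by fun_prop)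

lemma norm_iteratedFDeriv_mul_conj_comp_sub_le (f χ : 𝓢(𝔼, ℂ)) (n : ℕ) (y x : 𝔼) :
    ‖iteratedFDeriv ℝ n (fun z => f z * starRingEnd ℂ (χ (z - y))) x‖ ≤
      ∑ i ∈ range (n + 1), (n.choose i : ℝ) * ‖iteratedFDeriv ℝ i f x‖ *
        ‖iteratedFDeriv ℝ (n - i) χ (x - y)‖ := by
  simpa only [norm_iteratedFDeriv_conj_comp_sub] using
    norm_iteratedFDeriv_mul_le (f.smooth ⊤) (contDiff_conj_comp_sub χ y) x
      (by exact_mod_cast le_top)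

lemma jb_pow_mul_norm_pow_le (N k : ℕ) (y x : 𝔼) :
    jb y ^ N * ‖x‖ ^ k ≤ (1 + ‖x‖) ^ (N + k) * (1 + ‖x - y‖) ^ N := by
  have hy : jb y ≤ (1 + ‖x‖) * (1 + ‖x - y‖) := by
    nlinarith [jb_le_one_add_norm y, norm_le_norm_add_norm_sub' y x, norm_sub_rev x y,
      norm_nonneg x, norm_nonneg (x - y)]
  calc jb y ^ N * ‖x‖ ^ k ≤ ((1 + ‖x‖) * (1 + ‖x - y‖)) ^ N * (1 + ‖x‖) ^ k := by
        gcongr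
        · exact jb_nonneg y
        · linarith
    _ = (1 + ‖x‖) ^ (N + k) * (1 + ‖x - y‖) ^ N := by rw [mul_pow, pow_add]; ring

lemma exists_jb_pow_mul_norm_iteratedFDeriv_mul_conj_comp_sub_le (f χ : 𝓢(𝔼, ℂ))
    (k n N : ℕ) : ∃ C, 0 ≤ C ∧ ∀ y x : 𝔼, jb y ^ N *
      (‖x‖ ^ k * ‖iteratedFDeriv ℝ n (fun z => f z * starRingEnd ℂ (χ (z - y))) x‖) ≤ C := by
  set A := 2 ^ (N + k) * (Iic (N + k, n)).sup (schwartzSeminormFamily ℝ 𝔼 ℂ) f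
  set B := 2 ^ N * (Iic (N, n)).sup (schwartzSeminormFamily ℝ 𝔼 ℂ) χ
  refine ⟨2 ^ n * A * B, by positivity, fun y x => ?_⟩
  calc jb y ^ N * (‖x‖ ^ k * ‖iteratedFDeriv ℝ n (fun z => f z * starRingEnd ℂ (χ (z - y))) x‖)
      ≤ (1 + ‖x‖) ^ (N + k) * (1 + ‖x - y‖) ^ N *
          ∑ i ∈ range (n + 1), (n.choose i : ℝ) * ‖iteratedFDeriv ℝ i f x‖ *
            ‖iteratedFDeriv ℝ (n - i) χ (x - y)‖ := by
        rw [← mul_assoc]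
        exact mul_le_mul (jb_pow_mul_norm_pow_le N k y x)
          (norm_iteratedFDeriv_mul_conj_comp_sub_le f χ n y x) (norm_nonneg _) (by positivity)
    _ = ∑ i ∈ range (n + 1), (n.choose i : ℝ) *
          ((1 + ‖x‖) ^ (N + k) * ‖iteratedFDeriv ℝ i f x‖) *
            ((1 + ‖x - y‖) ^ N * ‖iteratedFDeriv ℝ (n - i) χ (x - y)‖) := by
        rw [mul_sum]; congr 1 with i; ring
    _ ≤ ∑ i ∈ range (n + 1), (n.choose i : ℝ) * A * B := by
        gcongr with i hi
        · exact one_add_le_sup_seminorm_apply (m := (N + k, n)) le_rfl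
            (Nat.le_of_lt_succ (mem_range.mp hi)) f x
        · exact one_add_le_sup_seminorm_apply (m := (N, n)) le_rfl (Nat.sub_le n i) χ (x - y)
    _ = 2 ^ n * A * B := by
        rw [← sum_mul, ← sum_mul, ← Nat.cast_sum, Nat.sum_range_choose, Nat.cast_pow,
          Nat.cast_ofNat]

noncomputable def windowed (f χ : 𝓢(𝔼, ℂ)) (y : 𝔼) : 𝓢(𝔼, ℂ) where
  toFun z := f z * starRingEnd ℂ (χ (z - y))
  smooth' := (f.smooth ⊤).mul (contDiff_conj_comp_sub χ y)
  decay' k n := by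
    obtain ⟨C, -, hC⟩ := exists_jb_pow_mul_norm_iteratedFDeriv_mul_conj_comp_sub_le f χ k n 0
    exact ⟨C, fun x => by simpa using hC y x⟩

lemma windowed_apply (f χ : 𝓢(𝔼, ℂ)) (y z : 𝔼) :
    windowed f χ y z = f z * starRingEnd ℂ (χ (z - y)) := rfl

lemma isVonNBounded_range_jb_pow_smul_windowed (f χ : 𝓢(𝔼, ℂ)) (N : ℕ) :
    Bornology.IsVonNBounded ℝ (Set.range fun y => jb y ^ N • windowed f χ y) := by
  refine (schwartz_withSeminorms ℝ 𝔼 ℂ).isVonNBounded_iff_seminorm_bounded.mpr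
    fun ⟨k, n⟩ => ?_
  obtain ⟨C, hC0, hC⟩ := exists_jb_pow_mul_norm_iteratedFDeriv_mul_conj_comp_sub_le f χ k n N
  refine ⟨C + 1, by positivity, ?_⟩
  rintro _ ⟨y, rfl⟩
  have hy : 0 < jb y ^ N := pow_pos (jb_pos y) N
  have hseminorm : SchwartzMap.seminorm ℝ k n (windowed f χ y) ≤ C * (jb y ^ N)⁻¹ :=
    seminorm_le_bound ℝ k n _ (by positivity) fun x => by
      rw [le_mul_inv_iff₀ hy, mul_comm]
      exact hC y x
  calc schwartzSeminormFamily ℝ 𝔼 ℂ (k, n) (jb y ^ N • windowed f χ y)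
      = jb y ^ N * SchwartzMap.seminorm ℝ k n (windowed f χ y) := by
        rw [schwartzSeminormFamily_apply, map_smul_eq_mul, Real.norm_of_nonneg hy.le]
    _ ≤ C := by rwa [le_mul_inv_iff₀ hy, mul_comm] at hseminorm
    _ < C + 1 := lt_add_one C

lemma gaborT_eq_fourier_windowed (χ f : 𝓢(𝔼, ℂ)) (y η : 𝔼) :
    gaborT χ f y η = 𝓕 (windowed f χ y) η := by
  rw [SchwartzMap.fourier_coe, Real.fourier_eq', gaborT]
  congr 1 with x
  simp only [smul_eq_mul, map_mul, ← Complex.exp_conj, Complex.conj_ofReal, Complex.conj_I,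
    map_ofNat, real_inner_comm x η, windowed_apply]
  push_cast
  ring_nf

theorem gaborT_decay (χ f : 𝓢(𝔼, ℂ)) (N : ℕ) :
    ∃ C, 0 ≤ C ∧ ∀ y η : 𝔼, ‖gaborT χ f y η‖ ≤ C * jb y ^ (-(N : ℝ)) * jb η ^ (-(N : ℝ)) := by
  have hbounded :=
    (isVonNBounded_range_jb_pow_smul_windowed f χ N).image (fourierTransformCLM ℝ)
  obtain ⟨R, hR0, hR⟩ :=
    (schwartz_withSeminorms ℝ 𝔼 ℂ).image_isVonNBounded_iff_finset_seminorm_bounded _ |>.mp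
      hbounded (Iic (N, 0))
  refine ⟨2 ^ N * R, by positivity, fun y η => ?_⟩
  have hbound : jb y ^ N * jb η ^ N * ‖gaborT χ f y η‖ ≤ 2 ^ N * R := by
    have := one_add_le_sup_seminorm_apply (𝕜 := ℝ) (m := (N, 0)) le_rfl le_rfl
      (𝓕 (jb y ^ N • windowed f χ y)) η
    have hR' := (hR _ ⟨y, rfl⟩).le
    simp only [fourierTransformCLM_apply, FourierTransform.fourier_smul] at hR'
    rw [norm_iteratedFDeriv_zero, FourierTransform.fourier_smul, smul_apply, norm_smul,
      Real.norm_of_nonneg (pow_nonneg (jb_nonneg y) N), ← gaborT_eq_fourier_windowed] at this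
    calc jb y ^ N * jb η ^ N * ‖gaborT χ f y η‖
        ≤ (1 + ‖η‖) ^ N * (jb y ^ N * ‖gaborT χ f y η‖) := by
          rw [mul_comm (jb y ^ N), mul_assoc]
          exact mul_le_mul_of_nonneg_right (pow_le_pow_left₀ (jb_nonneg η) (jb_le_one_add_norm η) N)
            (mul_nonneg (pow_nonneg (jb_nonneg y) N) (norm_nonneg _))
      _ ≤ 2 ^ N * R := this.trans (by gcongr; exact hR')
  have hy := pow_pos (jb_pos y) N
  have hη := pow_pos (jb_pos η) N
  rw [Real.rpow_neg (jb_nonneg y), Real.rpow_neg (jb_nonneg η), Real.rpow_natCast,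
    Real.rpow_natCast, mul_assoc, ← mul_inv, le_mul_inv_iff₀ (mul_pos hy hη)]
  linarith

lemma integrable_norm_gaborT_mul_jb_rpow (χ f : 𝓢(𝔼, ℂ)) (a b : ℝ) :
    Integrable fun p : 𝔼 × 𝔼 => ‖gaborT χ f p.1 p.2‖ * jb p.1 ^ a * jb p.2 ^ b := by
  set N := ⌈max a b⌉₊ + d + 1
  have hN : max a b + d + 1 ≤ N := by
    push_cast [N]
    linarith [Nat.le_ceil (max a b)]
  obtain ⟨C, hC0, hC⟩ := gaborT_decay χ f N
  have hint : Integrable fun x : 𝔼 => jb x ^ (-((d : ℝ) + 1)) :=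
    integrable_jb_rpow_neg (by linarith)
  refine ((hint.mul_prod hint).const_mul C).mono' ?_ (Filter.Eventually.of_forall fun p => ?_)
  · refine ((continuous_gaborT χ f).norm.mul ?_).mul ?_ |>.aestronglyMeasurable
    · exact (continuous_jb.comp continuous_fst).rpow_const fun p => Or.inl (jb_pos _).ne'
    · exact (continuous_jb.comp continuous_snd).rpow_const fun p => Or.inl (jb_pos _).ne'
  · rw [Real.norm_of_nonneg
      (mul_nonneg (mul_nonneg (norm_nonneg _) (jb_rpow_nonneg _ _)) (jb_rpow_nonneg _ _))]
    calc ‖gaborT χ f p.1 p.2‖ * jb p.1 ^ a * jb p.2 ^ b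
        ≤ C * jb p.1 ^ (-(N : ℝ)) * jb p.2 ^ (-(N : ℝ)) * jb p.1 ^ a * jb p.2 ^ b := by
          gcongr
          · exact jb_rpow_nonneg _ _
          · exact jb_rpow_nonneg _ _
          · exact hC p.1 p.2
      _ = C * (jb p.1 ^ (-(N : ℝ)) * jb p.1 ^ a) * (jb p.2 ^ (-(N : ℝ)) * jb p.2 ^ b) := by ring
      _ ≤ C * (jb p.1 ^ (-((d : ℝ) + 1)) * jb p.2 ^ (-((d : ℝ) + 1))) := by
          rw [mul_assoc]
          refine mul_le_mul_of_nonneg_left (mul_le_mul ?_ ?_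
            (mul_nonneg (jb_rpow_nonneg _ _) (jb_rpow_nonneg _ _)) (jb_rpow_nonneg _ _)) hC0
          · exact jb_rpow_mul_rpow_le _ (by linarith [le_max_left a b])
          · exact jb_rpow_mul_rpow_le _ (by linarith [le_max_right a b])

lemma integral_norm_gaborT_sub_mul_jb_rpow_le (χ f : 𝓢(𝔼, ℂ)) (s : ℝ) (y₀ η₀ : 𝔼) :
    ∫ p : 𝔼 × 𝔼, ‖gaborT χ f (p.1 - y₀) (p.2 - η₀)‖ * jb p.1 ^ (-s) * jb p.2 ^ (-s) ≤
      (4 ^ |s| * ∫ q : 𝔼 × 𝔼, ‖gaborT χ f q.1 q.2‖ * jb q.1 ^ |s| * jb q.2 ^ |s|) *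
        jb y₀ ^ (-s) * jb η₀ ^ (-s) := by
  set G := fun q : 𝔼 × 𝔼 => ‖gaborT χ f q.1 q.2‖ * jb q.1 ^ |s| * jb q.2 ^ |s|
  set K := 4 ^ |s| * jb y₀ ^ (-s) * jb η₀ ^ (-s)
  have : (volume : Measure (𝔼 × 𝔼)).IsAddRightInvariant := by
    rw [Measure.volume_eq_prod]; infer_instance
  calc ∫ p : 𝔼 × 𝔼, ‖gaborT χ f (p.1 - y₀) (p.2 - η₀)‖ * jb p.1 ^ (-s) * jb p.2 ^ (-s)
      ≤ ∫ p, K * G (p - (y₀, η₀)) := by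
        refine integral_mono_of_nonneg (Filter.Eventually.of_forall fun p => ?_)
          (((integrable_norm_gaborT_mul_jb_rpow χ f |s| |s|).comp_sub_right (y₀, η₀)).const_mul K)
          (Filter.Eventually.of_forall fun p => ?_)
        · have := jb_rpow_nonneg p.1 (-s); have := jb_rpow_nonneg p.2 (-s); positivity
        · have h1 := jb_rpow_neg_le s p.1 y₀
          have h2 := jb_rpow_neg_le s p.2 η₀
          have hT := norm_nonneg (gaborT χ f (p.1 - y₀) (p.2 - η₀))
          calc ‖gaborT χ f (p.1 - y₀) (p.2 - η₀)‖ * jb p.1 ^ (-s) * jb p.2 ^ (-s)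
              ≤ ‖gaborT χ f (p.1 - y₀) (p.2 - η₀)‖ *
                  (2 ^ |s| * jb (p.1 - y₀) ^ |s| * jb y₀ ^ (-s)) *
                    (2 ^ |s| * jb (p.2 - η₀) ^ |s| * jb η₀ ^ (-s)) :=
                mul_le_mul (mul_le_mul_of_nonneg_left h1 hT) h2 (jb_rpow_nonneg _ _)
                  (mul_nonneg hT (le_trans (jb_rpow_nonneg _ _) h1))
            _ = K * G (p - (y₀, η₀)) := by
                simp only [K, G, Prod.fst_sub, Prod.snd_sub]
                rw [show (4 : ℝ) = 2 * 2 by norm_num, Real.mul_rpow zero_le_two zero_le_two]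
                ring
    _ = (4 ^ |s| * ∫ q, G q) * jb y₀ ^ (-s) * jb η₀ ^ (-s) := by
        rw [integral_const_mul, integral_sub_right_eq_self]
        ring

end

theorem gabor_norm_finite_and_wave_packet_bound_general (d : ℕ) (s : ℝ)
    (χ : SchwartzMap (EuclideanSpace ℝ (Fin d)) ℂ) :
    (∀ f : SchwartzMap (EuclideanSpace ℝ (Fin d)) ℂ,
      Integrable (fun p : EuclideanSpace ℝ (Fin d) × EuclideanSpace ℝ (Fin d) =>
        ‖gaborT χ f p.1 p.2‖ * jb p.1 ^ (-s) * jb p.2 ^ (-s))) ∧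
    ∃ C > (0 : ℝ), ∀ y₀ η₀ : EuclideanSpace ℝ (Fin d),
      (∫ p : EuclideanSpace ℝ (Fin d) × EuclideanSpace ℝ (Fin d),
        ‖∫ x : EuclideanSpace ℝ (Fin d),
            (χ (x - y₀) * Complex.exp (2 * Real.pi * Complex.I * ((inner ℝ η₀ x : ℝ) : ℂ))) *
            (starRingEnd ℂ) (χ (x - p.1) *
              Complex.exp (2 * Real.pi * Complex.I * ((inner ℝ p.2 x : ℝ) : ℂ)))‖ *
          jb p.1 ^ (-s) * jb p.2 ^ (-s)) ≤ C * jb y₀ ^ (-s) * jb η₀ ^ (-s) := by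
  refine ⟨fun f => integrable_norm_gaborT_mul_jb_rpow χ f (-s) (-s), ?_⟩
  set K := 4 ^ |s| * ∫ q : EuclideanSpace ℝ (Fin d) × EuclideanSpace ℝ (Fin d),
    ‖gaborT χ χ q.1 q.2‖ * jb q.1 ^ |s| * jb q.2 ^ |s|
  have hK : 0 ≤ K := mul_nonneg (by positivity) (integral_nonneg fun q =>
    mul_nonneg (mul_nonneg (norm_nonneg _) (jb_rpow_nonneg _ _)) (jb_rpow_nonneg _ _))
  refine ⟨K + 1, by linarith, fun y₀ η₀ => ?_⟩
  calc _ = ∫ p : EuclideanSpace ℝ (Fin d) × EuclideanSpace ℝ (Fin d),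
          ‖gaborT χ χ (p.1 - y₀) (p.2 - η₀)‖ * jb p.1 ^ (-s) * jb p.2 ^ (-s) := by
        congr 1 with p
        congr 2
        exact norm_integral_wavePacket_mul_conj χ y₀ η₀ p.1 p.2
    _ ≤ K * jb y₀ ^ (-s) * jb η₀ ^ (-s) := integral_norm_gaborT_sub_mul_jb_rpow_le χ χ s y₀ η₀
    _ ≤ (K + 1) * jb y₀ ^ (-s) * jb η₀ ^ (-s) := by
        have := jb_rpow_nonneg y₀ (-s)
        have := jb_rpow_nonneg η₀ (-s)
        gcongr
        linarith

/-- For any `s`, the `S^{-s}` norm `∫∫ |Tf(y,η)| ⟨y⟩^{-s} ⟨η⟩^{-s} dy dη` of a Schwartz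
function is finite, and the wave packet `χ_{y₀,η₀}` has `S^{-s}` norm
`≤ C(s) ⟨y₀⟩^{-s} ⟨η₀⟩^{-s}`. -/
theorem gabor_norm_finite_and_wave_packet_bound (d : ℕ) (s : ℝ)
    (χ : SchwartzMap (EuclideanSpace ℝ (Fin d)) ℂ)
    (hχ : ∫ x : EuclideanSpace ℝ (Fin d), ‖χ x‖ ^ 2 = 1) :
    (∀ f : SchwartzMap (EuclideanSpace ℝ (Fin d)) ℂ,
      Integrable (fun p : EuclideanSpace ℝ (Fin d) × EuclideanSpace ℝ (Fin d) =>
        ‖gaborT χ f p.1 p.2‖ * jb p.1 ^ (-s) * jb p.2 ^ (-s))) ∧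
    ∃ C > (0 : ℝ), ∀ y₀ η₀ : EuclideanSpace ℝ (Fin d),
      (∫ p : EuclideanSpace ℝ (Fin d) × EuclideanSpace ℝ (Fin d),
        ‖∫ x : EuclideanSpace ℝ (Fin d),
            (χ (x - y₀) * Complex.exp (2 * Real.pi * Complex.I * ((inner ℝ η₀ x : ℝ) : ℂ))) *
            (starRingEnd ℂ) (χ (x - p.1) *
              Complex.exp (2 * Real.pi * Complex.I * ((inner ℝ p.2 x : ℝ) : ℂ)))‖ *
          jb p.1 ^ (-s) * jb p.2 ^ (-s)) ≤ C * jb y₀ ^ (-s) * jb η₀ ^ (-s) :=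
  gabor_norm_finite_and_wave_packet_bound_general d s χ
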